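/- For every s with 0 < s ≤ 1 there exists a constant C such that for every positive integer n and all z, w ∈ ℂ with |z| ≤ 1 + s/√n and |w| ≤ 1 + s/√n, the Ginibre correlation kernel satisfies |K_n(z,w)| ≤ C·n/(1 + √n·|z−w|). -/

import Mathlib

/-!
Write `ζ = n z w̄ = r e^{iθ}`. Since `r = n|z||w|`, the Gaussian factor satisfies
`e^{r} e^{-n(|z|²+|w|²)/2} = e^{-n(|z|-|w|)²/2}`, which damps the radial separation.
For the angular separation, Abel summation of `s_n(ζ) = Σ (r^k/k!) e^{ikθ}` against the geometric
sums `Σ e^{ijθ} = O(1/|θ|)` bounds `|s_n(ζ)|` by the total variation of the Poisson weights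
`r^k/k!` times `π/|θ|`; the weights are unimodal with maximum `≤ e^r/√r` by Stirling, so
`|s_n(ζ)| (1 + √r |θ|) ≲ e^r`. Finally `|z - w| ≤ ||z| - |w|| + √(|z||w|) |θ|` combines the two
gains.
-/

/-- The Ginibre correlation kernel
`K_n(z,w) = n s_n(n z w̄) e^{−n(|z|²+|w|²)/2}` with `s_n(ζ) = Σ_{k<n} ζ^k/k!`. -/
noncomputable def ginibreKernel (n : ℕ) (z w : ℂ) : ℂ :=
  (n : ℂ) * (∑ k ∈ Finset.range n, ((n : ℂ) * z * (starRingEnd ℂ) w) ^ k / (k.factorial : ℂ)) *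
    Complex.exp (-(n : ℂ) * (((‖z‖ : ℝ) : ℂ) ^ 2 + ((‖w‖ : ℝ) : ℂ) ^ 2) / 2)

open Finset Real
open scoped Nat ComplexConjugate

lemma pow_succ_div_factorial_succ (r : ℝ) (k : ℕ) :
    r ^ (k + 1) / (k + 1)! = r ^ k / k ! * (r / (k + 1)) := by
  rw [Nat.factorial_succ]
  push_cast
  field_simp
  ring

lemma monotoneOn_pow_div_factorial {r : ℝ} (hr : 0 ≤ r) :
    MonotoneOn (fun k : ℕ ↦ r ^ k / k !) (Set.Iic ⌊r⌋₊) := by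
  refine monotoneOn_of_le_succ Set.ordConnected_Iic fun k _ _ hk ↦ ?_
  have hk : (k : ℝ) + 1 ≤ r := by
    have := Nat.cast_le (α := ℝ) |>.mpr (Order.succ_eq_add_one k ▸ (Set.mem_Iic.mp hk))
    push_cast at this
    exact this.trans (Nat.floor_le hr)
  simp only [Order.succ_eq_add_one, pow_succ_div_factorial_succ]
  exact le_mul_of_one_le_right (by positivity) ((one_le_div (by positivity)).mpr hk)

lemma antitoneOn_pow_div_factorial {r : ℝ} (hr : 0 ≤ r) :
    AntitoneOn (fun k : ℕ ↦ r ^ k / k !) (Set.Ici ⌊r⌋₊) := by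
  refine antitoneOn_of_succ_le Set.ordConnected_Ici fun k _ hk _ ↦ ?_
  have hk : r ≤ (k : ℝ) + 1 := by
    have := Nat.cast_le (α := ℝ) |>.mpr (Set.mem_Ici.mp hk)
    linarith [Nat.lt_floor_add_one r]
  simp only [Order.succ_eq_add_one, pow_succ_div_factorial_succ]
  exact mul_le_of_le_one_right (by positivity) ((div_le_one (by positivity)).mpr hk)

lemma pow_div_factorial_le_exp_div_sqrt {r : ℝ} (hr : 0 ≤ r) {k : ℕ} (hk : k ≠ 0) :
    r ^ k / k ! ≤ exp r / √(2 * π * k) := by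
  have hk0 : (0 : ℝ) < k := by positivity
  have hpow : (exp 1 * r / k) ^ k ≤ exp r := by
    calc (exp 1 * r / k) ^ k ≤ (exp 1 * exp (r / k - 1)) ^ k := by
          rw [mul_div_assoc]
          gcongr
          simpa using add_one_le_exp (r / k - 1)
      _ = exp r := by
          rw [← exp_add, ← exp_nat_mul]
          congr 1
          field_simp
          ring
  calc r ^ k / k ! ≤ r ^ k / (√(2 * π * k) * (k / exp 1) ^ k) := by
        gcongr
        exact Stirling.le_factorial_stirling k
    _ = (exp 1 * r / k) ^ k / √(2 * π * k) := by
        rw [div_pow, div_pow, mul_pow]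
        field_simp
    _ ≤ exp r / √(2 * π * k) := by gcongr

lemma pow_floor_div_factorial_le {r : ℝ} (hr : 1 ≤ r) : r ^ ⌊r⌋₊ / ⌊r⌋₊ ! ≤ exp r / √r := by
  have hm : 1 ≤ ⌊r⌋₊ := Nat.one_le_floor_iff r |>.2 hr
  have hm' : (1 : ℝ) ≤ ⌊r⌋₊ := by exact_mod_cast hm
  refine (pow_div_factorial_le_exp_div_sqrt (by linarith) (by omega)).trans ?_
  gcongr
  nlinarith [Nat.lt_floor_add_one r, pi_gt_three]

section Abel

variable {E : Type*} [NormedAddCommGroup E] [NormedSpace ℝ E]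

lemma norm_sum_range_smul_le {a : ℕ → ℝ} {z : ℕ → E} {G : ℝ}
    (hG : ∀ k, ‖∑ i ∈ range k, z i‖ ≤ G) (N : ℕ) :
    ‖∑ i ∈ range N, a i • z i‖ ≤
      (|a (N - 1)| + ∑ i ∈ range (N - 1), |a (i + 1) - a i|) * G := by
  rw [sum_range_by_parts, add_mul, sum_mul]
  refine (norm_sub_le _ _).trans
    (add_le_add ?_ ((norm_sum_le _ _).trans (sum_le_sum fun i _ ↦ ?_)))
  all_goals
    rw [norm_smul, Real.norm_eq_abs]
    gcongr
    exact hG _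

lemma sum_range_abs_sub_add_le_of_unimodal {a : ℕ → ℝ} {m : ℕ}
    (hmono : MonotoneOn a (Set.Iic m)) (hanti : AntitoneOn a (Set.Ici m)) (N : ℕ) :
    ∑ i ∈ range N, |a (i + 1) - a i| + a 0 + a N ≤ 2 * a m := by
  have telescope : ∀ N, (N ≤ m → ∑ i ∈ range N, |a (i + 1) - a i| + a 0 = a N) ∧
      (m ≤ N → ∑ i ∈ range N, |a (i + 1) - a i| + a 0 + a N = 2 * a m) := by
    intro N
    induction N with
    | zero =>
      refine ⟨fun _ ↦ by simp, fun h ↦ ?_⟩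
      obtain rfl : m = 0 := by omega
      simp only [sum_range_zero]
      ring
    | succ N ih =>
      rw [sum_range_succ]
      rcases Nat.lt_or_ge N m with hN | hN
      · have hstep : a N ≤ a (N + 1) :=
          hmono (Set.mem_Iic.2 hN.le) (Set.mem_Iic.2 hN) N.le_succ
        rw [abs_of_nonneg (sub_nonneg.2 hstep)]
        have := ih.1 hN.le
        refine ⟨fun _ ↦ by linarith, fun h ↦ ?_⟩
        obtain rfl : m = N + 1 := by omega
        linarith
      · have hstep : a (N + 1) ≤ a N :=
          hanti (Set.mem_Ici.2 hN) (Set.mem_Ici.2 (hN.trans N.le_succ)) N.le_succ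
        rw [abs_of_nonpos (sub_nonpos.2 hstep)]
        have := ih.2 hN
        exact ⟨fun h ↦ by omega, fun _ ↦ by linarith⟩
  rcases le_total N m with hN | hN
  · linarith [(telescope N).1 hN, hmono (Set.mem_Iic.2 hN) (Set.mem_Iic.2 le_rfl) hN]
  · exact ((telescope N).2 hN).le

lemma norm_sum_range_smul_le_of_unimodal {a : ℕ → ℝ} {z : ℕ → E} {m : ℕ} {G : ℝ}
    (ha : ∀ i, 0 ≤ a i) (hmono : MonotoneOn a (Set.Iic m)) (hanti : AntitoneOn a (Set.Ici m))
    (hG : ∀ k, ‖∑ i ∈ range k, z i‖ ≤ G) (N : ℕ) :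
    ‖∑ i ∈ range N, a i • z i‖ ≤ 2 * a m * G := by
  refine (norm_sum_range_smul_le hG N).trans ?_
  have hG0 : 0 ≤ G := (norm_nonneg _).trans (hG 0)
  have := sum_range_abs_sub_add_le_of_unimodal hmono hanti (N - 1)
  rw [abs_of_nonneg (ha _)]
  gcongr
  linarith [ha 0]

end Abel

lemma two_mul_abs_div_pi_le_norm_exp_mul_I_sub_one {θ : ℝ} (hθ : |θ| ≤ π) :
    2 * |θ| / π ≤ ‖Complex.exp (θ * Complex.I) - 1‖ := by
  have hsin := mul_abs_le_abs_sin (x := θ / 2) (by rw [abs_div, abs_two]; linarith)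
  rw [abs_div, abs_two] at hsin
  rw [mul_comm (θ : ℂ), Complex.norm_exp_I_mul_ofReal_sub_one, norm_mul, Real.norm_eq_abs,
    Real.norm_eq_abs, abs_two]
  calc 2 * |θ| / π = 2 * (2 / π * (|θ| / 2)) := by ring
    _ ≤ 2 * |sin (θ / 2)| := by gcongr

lemma norm_geom_sum_exp_mul_I_le {θ : ℝ} (hθ0 : θ ≠ 0) (hθ : |θ| ≤ π) (k : ℕ) :
    ‖∑ j ∈ range k, Complex.exp (θ * Complex.I) ^ j‖ ≤ π / |θ| := by
  have hden := two_mul_abs_div_pi_le_norm_exp_mul_I_sub_one hθ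
  have hpos : 0 < 2 * |θ| / π := by positivity
  have hq : Complex.exp (θ * Complex.I) ≠ 1 := fun h ↦ by
    rw [h, sub_self, norm_zero] at hden
    linarith
  have hnum : ‖Complex.exp (θ * Complex.I) ^ k - 1‖ ≤ 2 := by
    refine (norm_sub_le _ _).trans ?_
    rw [norm_pow, Complex.norm_exp_ofReal_mul_I, one_pow, norm_one]
    norm_num
  rw [geom_sum_eq hq, norm_div]
  calc _ ≤ 2 / (2 * |θ| / π) := div_le_div₀ zero_le_two hnum hpos hden
    _ = π / |θ| := by field_simp

noncomputable def expPartialSum (N : ℕ) (ζ : ℂ) : ℂ :=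
  ∑ k ∈ range N, ζ ^ k / k !

lemma norm_expPartialSum_le (N : ℕ) (ζ : ℂ) : ‖expPartialSum N ζ‖ ≤ exp ‖ζ‖ := by
  refine (norm_sum_le _ _).trans (le_of_eq_of_le ?_ (sum_le_exp_of_nonneg (norm_nonneg ζ) N))
  simp [norm_pow]

lemma norm_expPartialSum_le_of_arg_ne_zero {ζ : ℂ} (hζ : 1 ≤ ‖ζ‖) (harg : ζ.arg ≠ 0) (N : ℕ) :
    ‖expPartialSum N ζ‖ ≤ 2 * π * exp ‖ζ‖ / (√‖ζ‖ * |ζ.arg|) := by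
  set r := ‖ζ‖
  set θ := ζ.arg
  have hsum : expPartialSum N ζ =
      ∑ k ∈ range N, (r ^ k / k !) • Complex.exp (θ * Complex.I) ^ k := by
    refine sum_congr rfl fun k _ ↦ ?_
    conv_lhs => rw [← Complex.norm_mul_exp_arg_mul_I ζ]
    rw [Complex.real_smul, mul_pow]
    push_cast
    ring
  rw [hsum]
  refine (norm_sum_range_smul_le_of_unimodal (fun k ↦ by positivity)
    (monotoneOn_pow_div_factorial (by linarith)) (antitoneOn_pow_div_factorial (by linarith))
    (norm_geom_sum_exp_mul_I_le harg (Complex.abs_arg_le_pi ζ)) N).trans ?_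
  have hθ : 0 < |θ| := abs_pos.2 harg
  have hr : 0 < √r := sqrt_pos.2 (by linarith)
  calc 2 * (r ^ ⌊r⌋₊ / ⌊r⌋₊ !) * (π / |θ|) ≤ 2 * (exp r / √r) * (π / |θ|) := by
        gcongr 2 * ?_ * _
        exact pow_floor_div_factorial_le hζ
    _ = 2 * π * exp r / (√r * |θ|) := by field_simp

lemma norm_expPartialSum_mul_le (N : ℕ) (ζ : ℂ) :
    ‖expPartialSum N ζ‖ * (1 + √‖ζ‖ * |ζ.arg|) ≤ (1 + 2 * π) * exp ‖ζ‖ := by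
  have hrad := norm_expPartialSum_le N ζ
  have hang : ‖expPartialSum N ζ‖ * (√‖ζ‖ * |ζ.arg|) ≤ 2 * π * exp ‖ζ‖ := by
    rcases eq_or_ne ζ.arg 0 with harg | harg
    · rw [harg, abs_zero, mul_zero, mul_zero]
      positivity
    rcases lt_or_ge ‖ζ‖ 1 with hr | hr
    · calc ‖expPartialSum N ζ‖ * (√‖ζ‖ * |ζ.arg|) ≤ exp ‖ζ‖ * (1 * π) := by
            gcongr
            · exact sqrt_le_one.2 hr.le
            · exact Complex.abs_arg_le_pi ζ
        _ ≤ 2 * π * exp ‖ζ‖ := by nlinarith [pi_pos, exp_pos ‖ζ‖]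
    · rw [← le_div_iff₀ (by positivity)]
      exact norm_expPartialSum_le_of_arg_ne_zero hr harg N
  linarith

lemma norm_sub_le_abs_norm_sub_norm_add (z w : ℂ) :
    ‖z - w‖ ≤ |‖z‖ - ‖w‖| + √(‖z‖ * ‖w‖) * |(z * conj w).arg| := by
  set θ := (z * conj w).arg
  have hre : (z * conj w).re = ‖z‖ * ‖w‖ * cos θ := by
    rw [← Complex.norm_mul_cos_arg, norm_mul, Complex.norm_conj]
  have hcos : 0 ≤ ‖z‖ * ‖w‖ * (cos θ - (1 - θ ^ 2 / 2)) :=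
    mul_nonneg (by positivity) (sub_nonneg.2 one_sub_sq_div_two_le_cos)
  have hcross : 0 ≤ |‖z‖ - ‖w‖| * (√(‖z‖ * ‖w‖) * |θ|) := by positivity
  refine (pow_le_pow_iff_left₀ (norm_nonneg _) (by positivity) two_ne_zero).1 ?_
  rw [Complex.sq_norm, Complex.normSq_sub, ← Complex.sq_norm, ← Complex.sq_norm, hre, add_sq,
    mul_pow, sq_abs, sq_abs, sq_sqrt (by positivity)]
  nlinarith

lemma one_add_mul_exp_neg_sq_div_two_le (t : ℝ) : (1 + t) * exp (-(t ^ 2 / 2)) ≤ 2 := by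
  rw [exp_neg, ← div_eq_mul_inv, div_le_iff₀ (exp_pos _)]
  nlinarith [add_one_le_exp (t ^ 2 / 2), sq_nonneg (2 * t - 1)]

lemma norm_ginibreKernel (n : ℕ) (z w : ℂ) :
    ‖ginibreKernel n z w‖ =
      n * ‖expPartialSum n (n * z * conj w)‖ * exp (-(n * (‖z‖ ^ 2 + ‖w‖ ^ 2)) / 2) := by
  have hexp : -(n : ℂ) * ((‖z‖ : ℂ) ^ 2 + (‖w‖ : ℂ) ^ 2) / 2 =
      ((-(n * (‖z‖ ^ 2 + ‖w‖ ^ 2)) / 2 : ℝ) : ℂ) := by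
    push_cast
    ring
  rw [ginibreKernel, hexp, norm_mul, norm_mul, Complex.norm_natCast, Complex.norm_exp,
    Complex.ofReal_re]
  rfl

lemma norm_ginibreKernel_mul_le {n : ℕ} (hn : 0 < n) (z w : ℂ) :
    ‖ginibreKernel n z w‖ * (1 + √n * √(‖z‖ * ‖w‖) * |(z * conj w).arg|) ≤
      (1 + 2 * π) * n * exp (-(n * (‖z‖ - ‖w‖) ^ 2) / 2) := by
  set ζ : ℂ := n * z * conj w
  have hn0 : (0 : ℝ) < n := by exact_mod_cast hn
  have hnorm : ‖ζ‖ = n * (‖z‖ * ‖w‖) := by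
    simp only [ζ, norm_mul, Complex.norm_natCast, Complex.norm_conj, mul_assoc]
  have harg : ζ.arg = (z * conj w).arg := by
    rw [show ζ = (n : ℝ) * (z * conj w) by simp only [ζ, mul_assoc, Complex.ofReal_natCast]]
    exact_mod_cast Complex.arg_real_mul _ hn0
  have hsqrt : √n * √(‖z‖ * ‖w‖) = √‖ζ‖ := by rw [hnorm, sqrt_mul hn0.le]
  have hgauss : exp ‖ζ‖ * exp (-(n * (‖z‖ ^ 2 + ‖w‖ ^ 2)) / 2) =
      exp (-(n * (‖z‖ - ‖w‖) ^ 2) / 2) := by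
    rw [← exp_add, hnorm]
    ring_nf
  calc ‖ginibreKernel n z w‖ * (1 + √n * √(‖z‖ * ‖w‖) * |(z * conj w).arg|)
      = n * (‖expPartialSum n ζ‖ * (1 + √‖ζ‖ * |ζ.arg|)) *
          exp (-(n * (‖z‖ ^ 2 + ‖w‖ ^ 2)) / 2) := by
        rw [norm_ginibreKernel, hsqrt, harg]
        ring
    _ ≤ n * ((1 + 2 * π) * exp ‖ζ‖) * exp (-(n * (‖z‖ ^ 2 + ‖w‖ ^ 2)) / 2) := by
        gcongr n * ?_ * _
        exact norm_expPartialSum_mul_le n ζ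
    _ = (1 + 2 * π) * n * exp (-(n * (‖z‖ - ‖w‖) ^ 2) / 2) := by
        rw [← hgauss]
        ring

theorem ginibreKernel_offdiagonal_damping_general (s : ℝ) :
    ∃ C : ℝ, ∀ n : ℕ, 1 ≤ n → ∀ z w : ℂ,
      ‖z‖ ≤ 1 + s / Real.sqrt n → ‖w‖ ≤ 1 + s / Real.sqrt n →
      ‖ginibreKernel n z w‖ ≤
        C * n / (1 + Real.sqrt n * ‖z - w‖) := by
  refine ⟨2 * (1 + 2 * π), fun n hn z w _ _ ↦ ?_⟩
  have hn0 : (0 : ℝ) < n := by exact_mod_cast hn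
  set δ := √n * |‖z‖ - ‖w‖|
  set α := √n * √(‖z‖ * ‖w‖) * |(z * conj w).arg|
  have hδ : -(n * (‖z‖ - ‖w‖) ^ 2) / 2 = -(δ ^ 2 / 2) := by
    rw [mul_pow, sq_sqrt hn0.le, sq_abs]
    ring
  have hdist : 1 + √n * ‖z - w‖ ≤ (1 + α) * (1 + δ) := by
    have := mul_le_mul_of_nonneg_left (norm_sub_le_abs_norm_sub_norm_add z w) (sqrt_nonneg n)
    have : 0 ≤ α * δ := by positivity
    linarith
  have hK := norm_ginibreKernel_mul_le hn z w
  rw [hδ] at hK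
  rw [le_div_iff₀ (by positivity)]
  calc ‖ginibreKernel n z w‖ * (1 + √n * ‖z - w‖)
      ≤ ‖ginibreKernel n z w‖ * (1 + α) * (1 + δ) := by
        rw [mul_assoc]
        gcongr
    _ ≤ (1 + 2 * π) * n * exp (-(δ ^ 2 / 2)) * (1 + δ) := by gcongr
    _ = (1 + 2 * π) * n * ((1 + δ) * exp (-(δ ^ 2 / 2))) := by ring
    _ ≤ (1 + 2 * π) * n * 2 := by gcongr; exact one_add_mul_exp_neg_sq_div_two_le δ
    _ = 2 * (1 + 2 * π) * n := by ring

/-- Off-diagonal damping for the Ginibre kernel: for `0 < s ≤ 1` there is `C` with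
`|K_n(z,w)| ≤ C n / (1 + √n |z − w|)` for all `z, w` in `D(0; 1 + s/√n)`. -/
theorem ginibreKernel_offdiagonal_damping (s : ℝ) (hs0 : 0 < s) (hs1 : s ≤ 1) :
    ∃ C : ℝ, ∀ n : ℕ, 1 ≤ n → ∀ z w : ℂ,
      ‖z‖ ≤ 1 + s / Real.sqrt n → ‖w‖ ≤ 1 + s / Real.sqrt n →
      ‖ginibreKernel n z w‖ ≤
        C * n / (1 + Real.sqrt n * ‖z - w‖) :=
  ginibreKernel_offdiagonal_damping_general s
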